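/- A pair (w,c), with w a word of positive integers and c a nondecreasing integer sequence of the same length, is a k-ribbon word if and only if there exists a k-tuple of semi-standard Young tableaux of skew shapes such that w is the content reading word of the k-tuple and c is the corresponding sequence of shifted contents, read in the same order. -/

import Mathlib

open scoped Classical

noncomputable section

/-! ### Signed, colored graphs -/

/-- A signed, colored graph of type `(n, N)`: a vertex set `V`, a signature
function `σ : V → {±1}^(N-1)` (encoded as a function `ℕ → ℤ` whose values are `±1`
for `1 ≤ i ≤ N-1`), and for each `1 < i < n` a set of edges `E_i` (encoded as a
symmetric irreflexive relation). -/
structure SCG (V : Type) (n N : ℕ) where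
  sgn : V → ℕ → ℤ
  edge : ℕ → V → V → Prop
  sgn_pm : ∀ v i, 1 ≤ i → i < N → sgn v i = 1 ∨ sgn v i = -1
  edge_symm : ∀ i v w, edge i v w → edge i w v
  edge_ne : ∀ i v w, edge i v w → v ≠ w
  edge_supp : ∀ i v w, edge i v w → 1 < i ∧ i < n

namespace SCG

variable {V W : Type} {n N n' N' : ℕ}

/-- Reachability using edges whose colors lie in `S`. -/
def ReachS (G : SCG V n N) (S : Set ℕ) (v w : V) : Prop :=
  Relation.ReflTransGen (fun a b => ∃ i ∈ S, G.edge i a b) v w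

/-- Reachability using all edges. -/
def Reach (G : SCG V n N) (v w : V) : Prop :=
  Relation.ReflTransGen (fun a b => ∃ i, G.edge i a b) v w

/-- The connected component of `v0`, as a signed colored graph. -/
def component (G : SCG V n N) (v0 : V) : SCG {v : V // G.Reach v0 v} n N where
  sgn v := G.sgn v.1
  edge i v w := G.edge i v.1 w.1
  sgn_pm v := G.sgn_pm v.1
  edge_symm i v w h := G.edge_symm i v.1 w.1 h
  edge_ne i v w h hvw := G.edge_ne i v.1 w.1 h (congrArg Subtype.val hvw)
  edge_supp i v w h := G.edge_supp i v.1 w.1 h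

/-- The `(m, M)`-restriction of a signed colored graph: keep the vertex set,
truncate the signature (i.e. only promise values on `1 ≤ i ≤ M-1`), and
keep only the edges `E_2, …, E_(m-1)`. -/
def restrict (G : SCG V n N) (m M : ℕ) (hm : m ≤ n) (hM : M ≤ N) : SCG V m M where
  sgn := G.sgn
  edge i v w := i < m ∧ G.edge i v w
  sgn_pm v i h1 h2 := G.sgn_pm v i h1 (lt_of_lt_of_le h2 hM)
  edge_symm i v w h := ⟨h.1, G.edge_symm i v w h.2⟩
  edge_ne i v w h := G.edge_ne i v w h.2
  edge_supp i v w h := ⟨(G.edge_supp i v w h.2).1, h.1⟩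

/-- A morphism of signed colored graphs of the same type: preserves all
signature coordinates and all colored edges. -/
def IsMorphism (G : SCG V n N) (H : SCG W n N) (φ : V → W) : Prop :=
  (∀ v i, 1 ≤ i → i < N → H.sgn (φ v) i = G.sgn v i) ∧
  ∀ i v w, G.edge i v w → H.edge i (φ v) (φ w)

/-- Isomorphism of signed colored graphs: a bijective morphism. -/
def Isomorphic (G : SCG V n N) (H : SCG W n N) : Prop :=
  ∃ φ : V → W, IsMorphism G H φ ∧ Function.Bijective φ

/-- An isomorphism of edge-colored graphs between the connected component of `v0`
in `G` using the colors in `S`, and the connected component of `u0` in `H` using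
the colors `r '' S`, matching each color `i ∈ S` with the color `r i`. -/
def ColorIso (G : SCG V n N) (v0 : V) (H : SCG W n' N') (u0 : W)
    (r : ℕ → ℕ) (S : Set ℕ) : Prop :=
  ∃ f : {v : V // G.ReachS S v0 v} → {u : W // H.ReachS (r '' S) u0 u},
    Function.Bijective f ∧ ∀ i ∈ S, ∀ a b, G.edge i a.1 b.1 ↔ H.edge (r i) (f a).1 (f b).1

/-- Dual equivalence axiom 1. -/
def Ax1 (G : SCG V n N) : Prop :=
  ∀ i, 1 < i → i < n → ∀ w, (G.sgn w (i - 1) = -G.sgn w i ↔ ∃! x, G.edge i w x)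

/-- Dual equivalence axiom 2. -/
def Ax2 (G : SCG V n N) : Prop :=
  ∀ i v w, G.edge i v w →
    G.sgn v (i - 1) = -G.sgn w (i - 1) ∧ G.sgn v i = -G.sgn w i ∧
      ∀ h, h + 2 < i ∨ i + 1 < h → G.sgn v h = G.sgn w h

/-- Dual equivalence axiom 3. -/
def Ax3 (G : SCG V n N) : Prop :=
  ∀ i v w, G.edge i v w →
    (G.sgn v (i - 2) = -G.sgn w (i - 2) → G.sgn v (i - 2) = -G.sgn v (i - 1)) ∧
    (G.sgn v (i + 1) = -G.sgn w (i + 1) → G.sgn v (i + 1) = -G.sgn v i)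

/-- Dual equivalence axiom 5. -/
def Ax5 (G : SCG V n N) : Prop :=
  ∀ i j w x y, G.edge i w x → G.edge j x y → i + 3 ≤ j ∨ j + 3 ≤ i →
    ∃ v, G.edge j w v ∧ G.edge i v y

/-- Dual equivalence axiom 6 : any two vertices of a connected component of
`E_2 ∪ ⋯ ∪ E_i` may be joined by a path crossing at most one `E_i` edge. -/
def Ax6 (G : SCG V n N) : Prop :=
  ∀ i, 1 < i → i < n → ∀ v w : V, G.ReachS (Set.Icc 2 i) v w →
    ∃ u u', G.ReachS (Set.Icc 2 (i - 1)) v u ∧ (u = u' ∨ G.edge i u u') ∧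
      G.ReachS (Set.Icc 2 (i - 1)) u' w

end SCG

/-! ### Standard Young tableaux and the standard dual equivalence graph -/

/-- A standard Young tableau of shape `μ`, recorded by the function sending
`k : Fin μ.card` to the cell containing the entry `k+1`.  (Cells are in matrix
coordinates `(row, column)`; entries increase along rows and along columns.) -/
structure SYT (μ : YoungDiagram) where
  cellOf : Fin μ.card → ℕ × ℕ
  mem_cells : ∀ k, cellOf k ∈ μ.cells
  inj : Function.Injective cellOf
  row_mono : ∀ k l, (cellOf k).1 = (cellOf l).1 → (cellOf k).2 < (cellOf l).2 → k < l
  col_mono : ∀ k l, (cellOf k).2 = (cellOf l).2 → (cellOf k).1 < (cellOf l).1 → k < l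

instance (μ : YoungDiagram) : Finite (SYT μ) := by
  apply Finite.of_injective
    (fun T : SYT μ => fun k => (⟨T.cellOf k, T.mem_cells k⟩ : {x : ℕ × ℕ // x ∈ μ.cells}))
  intro T U h
  cases T; cases U
  simp only [SYT.mk.injEq]
  funext k
  exact congrArg Subtype.val (congrFun h k)

/-- The content of a cell: `column - row`. -/
def cellContent (x : ℕ × ℕ) : ℤ := (x.2 : ℤ) - (x.1 : ℤ)

/-- `x` comes before `y` in the content reading order: smaller content first,
and within a diagonal, southwest to northeast. -/
def readBefore (x y : ℕ × ℕ) : Prop :=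
  cellContent x < cellContent y ∨ (cellContent x = cellContent y ∧ x.2 < y.2)

/-- The cell containing the entry `a` (for `1 ≤ a ≤ μ.card`). -/
def SYT.cell {μ : YoungDiagram} (T : SYT μ) (a : ℕ) : ℕ × ℕ :=
  if h : 1 ≤ a ∧ a ≤ μ.card then T.cellOf ⟨a - 1, by omega⟩ else (0, 0)

/-- The descent signature of a standard tableau: `σ(T)_i = +1` iff `i` appears
before `i+1` in the content reading word. -/
def sytSgn {μ : YoungDiagram} (T : SYT μ) : ℕ → ℤ := fun i =>
  if readBefore (T.cell i) (T.cell (i + 1)) then 1 else -1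

/-- The entry `b` lies between the entries `a` and `c` in the content reading
word of `T`. -/
def posBetween {μ : YoungDiagram} (T : SYT μ) (a b c : ℕ) : Prop :=
  (readBefore (T.cell a) (T.cell b) ∧ readBefore (T.cell b) (T.cell c)) ∨
  (readBefore (T.cell c) (T.cell b) ∧ readBefore (T.cell b) (T.cell a))

/-- `U` is obtained from `T` by exchanging the cells of the entries `a`, `b`. -/
def swapEq {μ : YoungDiagram} (T U : SYT μ) (a b : ℕ) : Prop :=
  ∀ x, 1 ≤ x → x ≤ μ.card →
    U.cell x = if x = a then T.cell b else if x = b then T.cell a else T.cell x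

/-- The elementary dual equivalence for `i-1, i, i+1`: the middle letter (in
reading order) of `i-1, i, i+1` is not `i`, and the outer two letters are
exchanged. -/
def stdEdgeCore (μ : YoungDiagram) (i : ℕ) (T U : SYT μ) : Prop :=
  1 < i ∧ i < μ.card ∧
    ((posBetween T i (i + 1) (i - 1) ∧ swapEq T U (i - 1) i) ∨
     (posBetween T i (i - 1) (i + 1) ∧ swapEq T U i (i + 1)))

/-- The standard dual equivalence graph `G_μ` for a partition `μ` of `n`. -/
def stdDEG (n : ℕ) (μ : YoungDiagram) (hcard : μ.card = n) : SCG (SYT μ) n n where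
  sgn T := sytSgn T
  edge i T U := T ≠ U ∧ (stdEdgeCore μ i T U ∨ stdEdgeCore μ i U T)
  sgn_pm := by
    intro v i _ _
    simp only [sytSgn]
    split
    · exact Or.inl rfl
    · exact Or.inr rfl
  edge_symm := by
    rintro i T U ⟨h1, h2⟩
    exact ⟨h1.symm, h2.symm⟩
  edge_ne := fun i T U h => h.1
  edge_supp := by
    rintro i T U ⟨h1, h2 | h2⟩ <;> exact ⟨h2.1, hcard ▸ h2.2.1⟩

namespace SCG

variable {V W : Type} {n N : ℕ}

/-- Dual equivalence axiom 4 : every connected component of `E_(i-1) ∪ E_i` is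
isomorphic, as an edge-colored graph, to a connected component of the
restriction to colors `{2,3}` (relabelled `i-1, i`) of a standard dual
equivalence graph `G_μ` with `μ ⊢ 4`; and similarly for three colors and
partitions of `5`. -/
def Ax4 (G : SCG V n N) : Prop :=
  (∀ i, 2 < i → i < n → ∀ v0 : V, ∃ (μ : YoungDiagram) (h4 : μ.card = 4) (T0 : SYT μ),
      G.ColorIso v0 (stdDEG 4 μ h4) T0 (· + 3 - i) {i - 1, i}) ∧
  (∀ i, 3 < i → i < n → ∀ v0 : V, ∃ (μ : YoungDiagram) (h5 : μ.card = 5) (T0 : SYT μ),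
      G.ColorIso v0 (stdDEG 5 μ h5) T0 (· + 4 - i) {i - 2, i - 1, i})

/-- A dual equivalence graph of type `(n,N)`. -/
def IsDEG (G : SCG V n N) : Prop :=
  n ≤ N ∧ G.Ax1 ∧ G.Ax2 ∧ G.Ax3 ∧ G.Ax4 ∧ G.Ax5 ∧ G.Ax6

end SCG

/-! ### Quasisymmetric functions and Schur functions -/

/-- Gessel's fundamental quasisymmetric function `Q_σ` of degree `n`, for a
signature `s` (with `s j` the sign `σ_j` for `1 ≤ j ≤ n-1`), as a formal power
series in the variables `x_0, x_1, x_2, …` (representing `x_1, x_2, …`).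
It is the sum of `x_(i_1) ⋯ x_(i_n)` over weakly increasing sequences
`i_1 ≤ ⋯ ≤ i_n` such that `i_j = i_(j+1)` forces `σ_j = +1`. -/
def Qfun (R : Type) [CommRing R] (n : ℕ) (s : ℕ → ℤ) : MvPowerSeries ℕ R := fun d =>
  ((Set.ncard {f : Fin n → ℕ | Monotone f ∧
      (∀ (j : ℕ) (hj : j < n), 1 ≤ j → f ⟨j - 1, by omega⟩ = f ⟨j, hj⟩ → s j = 1) ∧
      ∑ k : Fin n, Finsupp.single (f k) 1 = d} : ℕ) : R)

/-- The Schur function `s_μ = Σ_(T ∈ SYT(μ)) Q_(σ(T))`. -/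
def schurPS (R : Type) [CommRing R] (μ : YoungDiagram) : MvPowerSeries ℕ R :=
  ∑ᶠ T : SYT μ, Qfun R μ.card (sytSgn T)

/-- Symmetry of a formal power series in `x_0, x_1, …`: invariance of the
coefficients under every permutation of the variables. -/
def MvPSSymmetric {R : Type} [CommRing R] (F : MvPowerSeries ℕ R) : Prop :=
  ∀ (g : Equiv.Perm ℕ) (d : ℕ →₀ ℕ),
    MvPowerSeries.coeff (Finsupp.equivMapDomain g d) F = MvPowerSeries.coeff d F

/-- Schur positivity: `F` is a nonnegative integer combination of Schur functions. -/
def SchurPositive (F : MvPowerSeries ℕ ℤ) : Prop :=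
  ∃ a : YoungDiagram → ℕ, (Function.support a).Finite ∧
    F = ∑ᶠ μ : YoungDiagram, (a μ : ℤ) • schurPS ℤ μ

/-! ### Words, ribbon words and the LLT graphs -/

/-- A standard word of length `n`: a bijection from positions `1,…,n` to
letters `1,…,n` (and `0` outside this range). -/
def IsStdWord (n : ℕ) (w : ℕ → ℕ) : Prop :=
  Set.BijOn w (Set.Icc 1 n) (Set.Icc 1 n) ∧ ∀ p, p ∉ Set.Icc 1 n → w p = 0

/-- A word of positive integers of length `n`. -/
def IsPosWord (n : ℕ) (w : ℕ → ℕ) : Prop :=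
  (∀ p ∈ Set.Icc 1 n, 1 ≤ w p) ∧ ∀ p, p ∉ Set.Icc 1 n → w p = 0

/-- The `k`-descent set of the pair `(w, c)` (as a set of pairs of positions). -/
def DesK (k n : ℕ) (w : ℕ → ℕ) (c : ℕ → ℤ) : Set (ℕ × ℕ) :=
  {pq : ℕ × ℕ | pq.1 ∈ Set.Icc 1 n ∧ pq.2 ∈ Set.Icc 1 n ∧ w pq.2 < w pq.1 ∧
    c pq.2 - c pq.1 = (k : ℤ)}

/-- The set of `k`-inversions of the pair `(w, c)`. -/
def InvK (k n : ℕ) (w : ℕ → ℕ) (c : ℕ → ℤ) : Set (ℕ × ℕ) :=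
  {pq : ℕ × ℕ | pq.1 ∈ Set.Icc 1 n ∧ pq.2 ∈ Set.Icc 1 n ∧ w pq.2 < w pq.1 ∧
    0 < c pq.2 - c pq.1 ∧ c pq.2 - c pq.1 < (k : ℤ)}

/-- The `k`-inversion number of `(w, c)`. -/
def invK (k n : ℕ) (w : ℕ → ℕ) (c : ℕ → ℤ) : ℕ := (InvK k n w c).ncard

/-- The pair `(w, c)` is a `k`-ribbon word. -/
def IsRibbonWord (k n : ℕ) (w : ℕ → ℕ) (c : ℕ → ℤ) : Prop :=
  ∀ p, 1 ≤ p → p + 1 ≤ n → c p = c (p + 1) →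
    (∃ h, h ∈ Set.Icc 1 n ∧ c h = c p - (k : ℤ) ∧ w p < w h ∧ w h ≤ w (p + 1)) ∧
    (∃ j, j ∈ Set.Icc 1 n ∧ c j = c p + (k : ℤ) ∧ w p ≤ w j ∧ w j < w (p + 1))

/-- The letter `a` appears to the left of the letter `b` in the word `w`. -/
def leftOf (n : ℕ) (w : ℕ → ℕ) (a b : ℕ) : Prop :=
  ∃ p q, p ∈ Set.Icc 1 n ∧ q ∈ Set.Icc 1 n ∧ p < q ∧ w p = a ∧ w q = b

/-- The descent signature of a word: `σ(w)_i = +1` iff `i` is left of `i+1`. -/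
def wordSgn (n : ℕ) (w : ℕ → ℕ) : ℕ → ℤ := fun i =>
  if leftOf n w i (i + 1) then 1 else -1

/-- The position of the letter `ℓ` in the word `w`. -/
def posOf (n : ℕ) (w : ℕ → ℕ) (ℓ : ℕ) : ℕ := sInf {p | p ∈ Set.Icc 1 n ∧ w p = ℓ}

/-- The involution `D_i^(k)` on standard words: if `i` lies between `i-1` and
`i+1` do nothing; otherwise apply `d_i` (switch the outer two of the letters
`i-1, i, i+1`) when `dist(i-1,i,i+1) > k`, and `d̃_i` (cycle the three letters
among their positions) when `dist(i-1,i,i+1) ≤ k`. -/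
def Dk (k n : ℕ) (c : ℕ → ℤ) (i : ℕ) (w : ℕ → ℕ) : ℕ → ℕ :=
  let p := posOf n w (i - 1)
  let q := posOf n w i
  let r := posOf n w (i + 1)
  if (p < q ∧ q < r) ∨ (r < q ∧ q < p) then w
  else
    let s1 := min p (min q r)
    let s3 := max p (max q r)
    let s2 := p + q + r - s1 - s3
    if (k : ℤ) < max |c p - c q| (max |c q - c r| |c p - c r|) then
      fun t => if t = s1 then w s3 else if t = s3 then w s1 else w t
    else if q = s1 then
      fun t => if t = s1 then w s2 else if t = s2 then w s3 else if t = s3 then w s1 else w t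
    else
      fun t => if t = s1 then w s3 else if t = s2 then w s1 else if t = s3 then w s2 else w t

/-- The vertex set `V^(k)_(c,D)`: standard `k`-ribbon words with content
vector `c` and `k`-descent set `D`. -/
def lltV (k n : ℕ) (c : ℕ → ℤ) (D : Set (ℕ × ℕ)) : Type :=
  {w : ℕ → ℕ // IsStdWord n w ∧ IsRibbonWord k n w c ∧ DesK k n w c = D}

instance lltV.finite (k n : ℕ) (c : ℕ → ℤ) (D : Set (ℕ × ℕ)) : Finite (lltV k n c D) := by
  apply Finite.of_injective
    (fun w : lltV k n c D => fun p : Fin (n + 1) => (⟨w.1 p, by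
      rcases Classical.em ((p : ℕ) ∈ Set.Icc 1 n) with h | h
      · exact Nat.lt_succ_of_le (w.2.1.1.mapsTo h).2
      · simp [w.2.1.2 _ h]⟩ : Fin (n + 1)))
  intro a b hab
  apply Subtype.ext
  funext p
  by_cases hp : p ∈ Set.Icc 1 n
  · have hlt : p < n + 1 := Nat.lt_succ_of_le hp.2
    exact congrArg Fin.val (congrFun hab ⟨p, hlt⟩)
  · rw [a.2.1.2 _ hp, b.2.1.2 _ hp]

/-- The signed, colored graph `G^(k)_(c,D)` on standard `k`-ribbon words with
content vector `c` and `k`-descent set `D`, with `i`-edges the pairs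
`{w, D_i^(k)(w)}` over vertices `w` admitting an `i`-neighbor. -/
def lltGraph (k n : ℕ) (c : ℕ → ℤ) (D : Set (ℕ × ℕ)) : SCG (lltV k n c D) n n where
  sgn w := wordSgn n w.1
  edge i v u := 1 < i ∧ i < n ∧ v ≠ u ∧
    ((wordSgn n v.1 (i - 1) = -wordSgn n v.1 i ∧ u.1 = Dk k n c i v.1) ∨
     (wordSgn n u.1 (i - 1) = -wordSgn n u.1 i ∧ v.1 = Dk k n c i u.1))
  sgn_pm := by
    intro v i _ _
    simp only [wordSgn]
    split
    · exact Or.inl rfl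
    · exact Or.inr rfl
  edge_symm := by
    rintro i v u ⟨h1, h2, h3, h4⟩
    exact ⟨h1, h2, h3.symm, h4.symm⟩
  edge_ne := fun i v u h => h.2.2.1
  edge_supp := fun i v u h => ⟨h.1, h.2.1⟩

/-- The descent set of a word. -/
def DesSet (n : ℕ) (w : ℕ → ℕ) : Finset ℕ :=
  (Finset.Icc 1 (n - 1)).filter fun p => w (p + 1) < w p

/-- The (skew) Schur function of the ribbon of size `n` whose descent set is
`E`, via its quasisymmetric expansion. -/
def ribbonSchurGF (n : ℕ) (E : Finset ℕ) : MvPowerSeries ℕ ℤ :=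
  ∑ᶠ w : {w : ℕ → ℕ // IsStdWord n w ∧ DesSet n w = E}, Qfun ℤ n (wordSgn n w.1)

/-! ### Tuples of skew tableaux and LLT polynomials -/

/-- A finite set of cells forming a skew shape `λ/ν`. -/
def IsSkewShape (S : Finset (ℕ × ℕ)) : Prop :=
  ∃ lam nu : YoungDiagram, nu ≤ lam ∧ S = lam.cells \ nu.cells

/-- A semistandard filling of the cell set `S`: positive entries on `S`, zero
elsewhere, weakly increasing along rows and strictly increasing along columns. -/
def SemistdOn (S : Finset (ℕ × ℕ)) (T : ℕ × ℕ → ℕ) : Prop :=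
  (∀ x ∈ S, 1 ≤ T x) ∧ (∀ x, x ∉ S → T x = 0) ∧
  (∀ r c1 c2, (r, c1) ∈ S → (r, c2) ∈ S → c1 ≤ c2 → T (r, c1) ≤ T (r, c2)) ∧
  (∀ r1 r2 cc, (r1, cc) ∈ S → (r2, cc) ∈ S → r1 < r2 → T (r1, cc) < T (r2, cc))

/-- A `k`-tuple of semistandard tableaux of shapes `S 0, …, S (k-1)`. -/
def SemistdTuple {k : ℕ} (S : Fin k → Finset (ℕ × ℕ)) (T : Fin k → ℕ × ℕ → ℕ) : Prop :=
  ∀ i, SemistdOn (S i) (T i)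

/-- The shifted content `c̃ = k·c(x) + i` of a cell `x` of the `i`-th shape. -/
def shiftedContent (k : ℕ) (x : Fin k × ℕ × ℕ) : ℤ :=
  (k : ℤ) * cellContent x.2 + (x.1 : ℤ)

/-- `e` enumerates the cells of the tuple of shapes `S` in content reading
order (increasing shifted content, southwest to northeast on diagonals). -/
def IsCellEnum (k n : ℕ) (S : Fin k → Finset (ℕ × ℕ)) (e : ℕ → Fin k × ℕ × ℕ) : Prop :=
  Set.BijOn e (Set.Icc 1 n) {ix : Fin k × ℕ × ℕ | ix.2 ∈ S ix.1} ∧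
  ∀ p q, p ∈ Set.Icc 1 n → q ∈ Set.Icc 1 n → p < q →
    (shiftedContent k (e p) < shiftedContent k (e q) ∨
     (shiftedContent k (e p) = shiftedContent k (e q) ∧ (e p).2.2 < (e q).2.2))

/-- The content reading word of a tuple `T`, via the enumeration `e`. -/
def readWord (n : ℕ) {k : ℕ} (e : ℕ → Fin k × ℕ × ℕ) (T : Fin k → ℕ × ℕ → ℕ) : ℕ → ℕ :=
  fun p => if p ∈ Set.Icc 1 n then T (e p).1 (e p).2 else 0

/-- The weight of a tuple of tableaux, as an exponent vector (the variable
`x_j` records entries equal to `j+1`). -/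
def tupleWeight {k : ℕ} (S : Fin k → Finset (ℕ × ℕ)) (T : Fin k → ℕ × ℕ → ℕ) : ℕ →₀ ℕ :=
  ∑ i : Fin k, ∑ x ∈ S i, Finsupp.single (T i x - 1) 1

/-- The number of `k`-inversions of a tuple of tableaux. -/
def invkTuple (k : ℕ) (S : Fin k → Finset (ℕ × ℕ)) (T : Fin k → ℕ × ℕ → ℕ) : ℕ :=
  Set.ncard {p : (Fin k × ℕ × ℕ) × (Fin k × ℕ × ℕ) |
    p.1.2 ∈ S p.1.1 ∧ p.2.2 ∈ S p.2.1 ∧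
    0 < shiftedContent k p.2 - shiftedContent k p.1 ∧
    shiftedContent k p.2 - shiftedContent k p.1 < (k : ℤ) ∧
    T p.2.1 p.2.2 < T p.1.1 p.1.2}

/-- The LLT polynomial `G̃^(k)_μ(x; q) = Σ_T q^(inv_k(T)) x^T`, as a formal
power series in `x` with coefficients in `ℤ[q]`. -/
def LLTpoly (k : ℕ) (S : Fin k → Finset (ℕ × ℕ)) : MvPowerSeries ℕ (Polynomial ℤ) :=
  fun d => ∑ᶠ T : {T : Fin k → ℕ × ℕ → ℕ // SemistdTuple S T ∧ tupleWeight S T = d},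
    (Polynomial.X : Polynomial ℤ) ^ invkTuple k S T.1

/-- The weight of a word. -/
def wordWeight (n : ℕ) (w : ℕ → ℕ) : ℕ →₀ ℕ :=
  ∑ p ∈ Finset.Icc 1 n, Finsupp.single (w p - 1) 1

/-- The generating function `Σ_((w,c) ∈ WRib_k(c,D)) q^(inv_k(w,c)) x^w` of all
`k`-ribbon words with content vector `c` and `k`-descent set `D`. -/
def ribbonWordGF (k n : ℕ) (c : ℕ → ℤ) (D : Set (ℕ × ℕ)) : MvPowerSeries ℕ (Polynomial ℤ) :=
  fun d => ∑ᶠ w : {w : ℕ → ℕ // IsPosWord n w ∧ IsRibbonWord k n w c ∧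
      DesK k n w c = D ∧ wordWeight n w = d},
    (Polynomial.X : Polynomial ℤ) ^ invK k n w.1 c

/-! ### Packages, types, local Schur positivity, axiom 4' and D graphs -/

namespace SCG

variable {V W : Type} {n N : ℕ}

/-- The `i`-package of a vertex: its connected component using only the edges
of colors `≤ i-3` or `≥ i+3`. -/
def packReach (G : SCG V n N) (i : ℕ) (v w : V) : Prop :=
  G.ReachS {j | j + 3 ≤ i ∨ i + 3 ≤ j} v w

/-- `w` admits a `j`-neighbor. -/
def Admits (G : SCG V n N) (j : ℕ) (w : V) : Prop := G.sgn w (j - 1) = -G.sgn w j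

/-- `w` has `i`-type W. -/
def TypeW (G : SCG V n N) (i : ℕ) (w : V) : Prop :=
  G.Admits (i - 1) w ∧ ∃ x, G.edge (i - 1) w x ∧ G.sgn x i = -G.sgn w i

/-- `w` has `i`-type A. -/
def TypeA (G : SCG V n N) (i : ℕ) (w : V) : Prop :=
  ¬G.TypeW i w ∧ ¬G.Admits (i - 2) w

/-- `w` has `i`-type B. -/
def TypeB (G : SCG V n N) (i : ℕ) (w : V) : Prop :=
  ¬G.TypeW i w ∧ G.Admits (i - 2) w ∧ ∃ x, G.edge (i - 2) w x ∧
    ((G.Admits (i - 1) w ∧ G.sgn w (i - 1) = -G.sgn x (i - 1)) ∨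
     (¬G.Admits (i - 1) w ∧ ∃ z, G.edge (i - 1) x z ∧ G.sgn w i = -G.sgn z i))

/-- `w` has `i`-type C. -/
def TypeC (G : SCG V n N) (i : ℕ) (w : V) : Prop :=
  ¬G.TypeW i w ∧ G.Admits (i - 2) w ∧ ∃ x, G.edge (i - 2) w x ∧
    ((G.Admits (i - 1) w ∧ G.sgn w (i - 1) = G.sgn x (i - 1)) ∨
     (¬G.Admits (i - 1) w ∧ ∃ z, G.edge (i - 1) x z ∧ G.sgn w i = G.sgn z i))

/-- Twice the number of edges of colors `i-1, i` in the connected component of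
`v0` under `E_(i-1) ∪ E_i` (each edge is counted once for each orientation). -/
def twoColorEdgeCount (G : SCG V n N) (i : ℕ) (v0 : V) : ℕ :=
  Set.ncard {t : ℕ × V × V | (t.1 = i - 1 ∨ t.1 = i) ∧ G.edge t.1 t.2.1 t.2.2 ∧
    G.ReachS {i - 1, i} v0 t.2.1}

/-- Axiom 4'a: every nontrivial connected component of `E_(i-1) ∪ E_i` has
either two or four edges. -/
def Ax4a (G : SCG V n N) : Prop :=
  ∀ i, 2 < i → i < n → ∀ v0 : V,
    (∃ a b j, G.ReachS {i - 1, i} v0 a ∧ (j = i - 1 ∨ j = i) ∧ G.edge j a b) →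
    G.twoColorEdgeCount i v0 = 4 ∨ G.twoColorEdgeCount i v0 = 8

/-- Axiom 4'b. -/
def Ax4b (G : SCG V n N) : Prop :=
  ∀ i, 3 < i → i < n → ∀ w x z, G.edge (i - 2) w x → G.edge i w z →
    G.sgn w (i - 1) = -G.sgn x (i - 1) → G.sgn w (i - 2) = -G.sgn z (i - 2) →
    ∃ y, G.edge (i - 1) w y ∧ (y = x ∨ y = z)

/-- Axiom 4'c. -/
def Ax4c (G : SCG V n N) : Prop :=
  ∀ i, 3 < i → i < n → ∀ w x, G.edge (i - 2) w x → G.TypeC i w → G.TypeW (i + 1) w →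
    G.TypeC i x ∧ G.TypeW (i + 1) x

/-- The restricted degree-4 signature of a vertex. -/
def sig3 (G : SCG V n N) (i : ℕ) (v : V) : ℕ → ℤ := fun j =>
  if j = 1 then G.sgn v (i - 2) else if j = 2 then G.sgn v (i - 1) else G.sgn v i

/-- The restricted degree-5 signature of a vertex. -/
def sig4 (G : SCG V n N) (i : ℕ) (v : V) : ℕ → ℤ := fun j =>
  if j = 1 then G.sgn v (i - 3) else if j = 2 then G.sgn v (i - 2)
  else if j = 3 then G.sgn v (i - 1) else G.sgn v i

/-- Local Schur positivity: the restricted degree-4 and degree-5 generating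
functions of the two- and three-color connected components are symmetric and
Schur positive. -/
def LSP (G : SCG V n N) : Prop :=
  (∀ i, 2 < i → i < n → ∀ v0 : V,
    MvPSSymmetric (∑ᶠ v : {v : V // G.ReachS {i - 1, i} v0 v}, Qfun ℤ 4 (G.sig3 i v.1)) ∧
    SchurPositive (∑ᶠ v : {v : V // G.ReachS {i - 1, i} v0 v}, Qfun ℤ 4 (G.sig3 i v.1))) ∧
  (∀ i, 3 < i → i < n → ∀ v0 : V,
    MvPSSymmetric (∑ᶠ v : {v : V // G.ReachS {i - 2, i - 1, i} v0 v}, Qfun ℤ 5 (G.sig4 i v.1)) ∧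
    SchurPositive (∑ᶠ v : {v : V // G.ReachS {i - 2, i - 1, i} v0 v}, Qfun ℤ 5 (G.sig4 i v.1)))

/-- A D graph: a locally Schur positive signed colored graph satisfying dual
equivalence axioms 1, 2, 3 and 5 together with axiom 4'. -/
def IsDGraph (G : SCG V n N) : Prop :=
  G.LSP ∧ G.Ax1 ∧ G.Ax2 ∧ G.Ax3 ∧ G.Ax5 ∧ G.Ax4a ∧ G.Ax4b ∧ G.Ax4c

/-- The set `W_i(G)` of vertices of `i`-type W whose `(i-1)`-neighbor and
`i`-neighbor differ. -/
def Wset (G : SCG V n N) (i : ℕ) : Set V :=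
  {w | G.TypeW i w ∧ ∀ x y, G.edge (i - 1) w x → G.edge i w y → x ≠ y}

/-- The set `X_i(G)` of vertices of `i`-type C with no `(i-1)`-neighbor such
that `E_(i-2) E_i ≠ E_i E_(i-2)` at the vertex. -/
def Xset (G : SCG V n N) (i : ℕ) : Set V :=
  {x | G.TypeC i x ∧ ¬G.Admits (i - 1) x ∧
    ∀ a b, (∃ z, G.edge i x z ∧ G.edge (i - 2) z a) →
      (∃ z, G.edge (i - 2) x z ∧ G.edge i z b) → a ≠ b}

/-- `f` is an isomorphism between the `i`-packages of `w` and `u`: a bijection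
preserving the truncated signature coordinates `σ_1, …, σ_(i-3), σ_(i+2), …,
σ_(N-1)` and all edges of colors `≤ i-3` or `≥ i+3`. -/
def PackIso (G : SCG V n N) (i : ℕ) (w u : V)
    (f : {v : V // G.packReach i w v} → {v : V // G.packReach i u v}) : Prop :=
  Function.Bijective f ∧
  (∀ v j, 1 ≤ j → (j + 3 ≤ i ∨ (i + 2 ≤ j ∧ j < N)) → G.sgn (f v).1 j = G.sgn v.1 j) ∧
  ∀ j, j + 3 ≤ i ∨ i + 3 ≤ j → ∀ a b, G.edge j a.1 b.1 ↔ G.edge j (f a).1 (f b).1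

/-- One half of the new `i`-edge relation used to redefine `E_i` from a package
isomorphism `f` between the `i`-packages of `w` and `u`. -/
def newEdgePhi (G : SCG V n N) (i : ℕ) (w u : V)
    (f : {v : V // G.packReach i w v} → {v : V // G.packReach i u v}) (a b : V) : Prop :=
  (∃ ha : G.packReach i w a, b = (f ⟨a, ha⟩).1) ∨
  (∃ a' b', ∃ ha' : G.packReach i w a', G.edge i a a' ∧ b' = (f ⟨a', ha'⟩).1 ∧ G.edge i b' b) ∨
  (G.edge i a b ∧ ¬G.packReach i w a ∧ ¬G.packReach i u a ∧
    ¬G.packReach i w b ∧ ¬G.packReach i u b)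

/-- The graph obtained from `G` by replacing the edges `E_i` according to the
involution determined by the package isomorphism `f` (this is `φ_i^w(G)`,
and also `ψ_i^x(G)` when applied to the appropriate packages). -/
def phiGraph (G : SCG V n N) (i : ℕ) (hi : 1 < i) (hin : i < n) (w u : V)
    (f : {v : V // G.packReach i w v} → {v : V // G.packReach i u v}) : SCG V n N where
  sgn := G.sgn
  edge j a b :=
    if j = i then a ≠ b ∧ (G.newEdgePhi i w u f a b ∨ G.newEdgePhi i w u f b a)
    else G.edge j a b
  sgn_pm := G.sgn_pm
  edge_symm := by
    intro j a b h
    by_cases hj : j = i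
    · rw [if_pos hj] at h ⊢
      exact ⟨h.1.symm, h.2.symm⟩
    · rw [if_neg hj] at h ⊢
      exact G.edge_symm j a b h
  edge_ne := by
    intro j a b h
    by_cases hj : j = i
    · rw [if_pos hj] at h; exact h.1
    · rw [if_neg hj] at h; exact G.edge_ne j a b h
  edge_supp := by
    intro j a b h
    by_cases hj : j = i
    · subst hj; exact ⟨hi, hin⟩
    · rw [if_neg hj] at h; exact G.edge_supp j a b h

end SCG

/-! ### Fillings and Macdonald polynomials via Haglund's formula -/

/-- The weight of a filling of a Young diagram. -/
def fillingWeight (ρ : YoungDiagram) (S : ℕ × ℕ → ℕ) : ℕ →₀ ℕ :=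
  ∑ x ∈ ρ.cells, Finsupp.single (S x - 1) 1

/-- The descent set of a filling: cells not in the first row whose entry
exceeds the entry immediately below (i.e. south, in French convention). -/
def macDes (ρ : YoungDiagram) (S : ℕ × ℕ → ℕ) : Set (ℕ × ℕ) :=
  {x | x ∈ ρ.cells ∧ 1 ≤ x.1 ∧ S (x.1 - 1, x.2) < S x}

/-- The arm length of a cell. -/
def armLen (ρ : YoungDiagram) (x : ℕ × ℕ) : ℕ := Set.ncard {c' | x.2 < c' ∧ (x.1, c') ∈ ρ.cells}

/-- The leg length of a cell. -/
def legLen (ρ : YoungDiagram) (x : ℕ × ℕ) : ℕ := Set.ncard {r' | x.1 < r' ∧ (r', x.2) ∈ ρ.cells}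

/-- The major index of a filling. -/
def macMaj (ρ : YoungDiagram) (S : ℕ × ℕ → ℕ) : ℕ :=
  (macDes ρ S).ncard + ∑ᶠ x ∈ macDes ρ S, legLen ρ x

/-- The set of inversion pairs (attacking pairs in reading order with the first
entry larger). -/
def macInvSet (ρ : YoungDiagram) (S : ℕ × ℕ → ℕ) : Set ((ℕ × ℕ) × (ℕ × ℕ)) :=
  {p | p.1 ∈ ρ.cells ∧ p.2 ∈ ρ.cells ∧
    ((p.1.1 = p.2.1 ∧ p.1.2 < p.2.2) ∨ (p.1.1 = p.2.1 + 1 ∧ p.2.2 < p.1.2)) ∧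
    S p.2 < S p.1}

/-- The inversion statistic of a filling. -/
def macInv (ρ : YoungDiagram) (S : ℕ × ℕ → ℕ) : ℕ :=
  (macInvSet ρ S).ncard - ∑ᶠ x ∈ macDes ρ S, armLen ρ x

/-- The transformed Macdonald polynomial via Haglund's formula
`H̃_μ(x; q, t) = Σ_S q^(inv S) t^(maj S) x^S`, with `q = X 0` and `t = X 1`. -/
def macdonald (ρ : YoungDiagram) : MvPowerSeries ℕ (MvPolynomial (Fin 2) ℤ) :=
  fun d => ∑ᶠ S : {S : ℕ × ℕ → ℕ //
      (∀ x ∈ ρ.cells, 1 ≤ S x) ∧ (∀ x, x ∉ ρ.cells → S x = 0) ∧ fillingWeight ρ S = d},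
    (MvPolynomial.X 0 : MvPolynomial (Fin 2) ℤ) ^ macInv ρ S.1 *
      (MvPolynomial.X 1 : MvPolynomial (Fin 2) ℤ) ^ macMaj ρ S.1

/-! ### Augmented standard dual equivalence graphs -/

/-- Standard tableaux of shape `ρ` augmented by the fixed filling `A` on the
entries `n+1, …, |ρ|` (the cell of the entry `v` being `A v`). -/
def AugSYT (ρ : YoungDiagram) (n : ℕ) (A : ℕ → ℕ × ℕ) : Type :=
  {T : SYT ρ // ∀ m : Fin ρ.card, n ≤ (m : ℕ) → T.cellOf m = A ((m : ℕ) + 1)}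

instance (ρ : YoungDiagram) (n : ℕ) (A : ℕ → ℕ × ℕ) : Finite (AugSYT ρ n A) := by
  unfold AugSYT; infer_instance

/-- The augmented standard dual equivalence graph `G_(λ,A)`, a signed colored
graph of type `(n, N)` on standard tableaux of shape `ρ` (of size `N`)
restricting to `A` on `ρ/λ`, with edges the elementary dual equivalences for
`i-1, i, i+1` with `i < n`. -/
def augDEG (n N : ℕ) (ρ : YoungDiagram) (hρ : ρ.card = N) (A : ℕ → ℕ × ℕ) :
    SCG (AugSYT ρ n A) n N where
  sgn T := sytSgn T.1
  edge i T U := i < n ∧ T ≠ U ∧ (stdEdgeCore ρ i T.1 U.1 ∨ stdEdgeCore ρ i U.1 T.1)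
  sgn_pm := by
    intro v i _ _
    simp only [sytSgn]
    split
    · exact Or.inl rfl
    · exact Or.inr rfl
  edge_symm := by
    rintro i T U ⟨h1, h2, h3⟩
    exact ⟨h1, h2.symm, h3.symm⟩
  edge_ne := fun i T U h => h.2.1
  edge_supp := by
    rintro i T U ⟨h1, h2, h3 | h3⟩ <;> exact ⟨h3.1, h1⟩

end

/-!
In a skew shape, two cells read consecutively on one shifted diagonal are diagonally adjacent,
so they span a `2 × 2` square whose other two cells, above and to the right, lie on the shifted
diagonals `c̃ - k` and `c̃ + k`; the semistandard conditions on that square are exactly the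
ribbon conditions.

Conversely, in a ribbon word the letters on each diagonal `{p | c p = ζ}` increase, and the
ribbon conditions say that between two letters of diagonal `ζ` there is one of diagonal `ζ + k`
and vice versa: the two diagonals interlace. Put diagonal `ζ` in consecutive rows from
`startRow ζ` on, where the start row increases by one from diagonal `ζ + k` to diagonal `ζ`
exactly when some letter of diagonal `ζ + k` is smaller than all letters of diagonal `ζ`.
Interlacing then makes rows weakly and columns strictly increasing, and since first and last rows
change by at most one between neighbouring diagonals, each shape is order-convex in `ℕ × ℕ`,
i.e. a skew shape.
-/

open Finset

theorem IsSkewShape.ordConnected {S : Finset (ℕ × ℕ)} (hS : IsSkewShape S) :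
    (S : Set (ℕ × ℕ)).OrdConnected := by
  obtain ⟨lam, nu, -, rfl⟩ := hS
  rw [coe_sdiff]
  exact lam.isLowerSet.ordConnected.inter nu.isLowerSet.compl.ordConnected

theorem isSkewShape_of_ordConnected {S : Finset (ℕ × ℕ)} (hS : (S : Set (ℕ × ℕ)).OrdConnected) :
    IsSkewShape S := by
  let lam : YoungDiagram :=
    ⟨S.biUnion Iic, fun a b hba ha => by
      obtain ⟨z, hz, haz⟩ := mem_biUnion.1 ha
      exact mem_biUnion.2 ⟨z, hz, mem_Iic.2 (hba.trans (mem_Iic.1 haz))⟩⟩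
  have hSlam : S ⊆ lam.cells := fun x hx => mem_biUnion.2 ⟨x, hx, mem_Iic.2 le_rfl⟩
  let nu : YoungDiagram :=
    ⟨lam.cells \ S, fun a b hba ha => by
      obtain ⟨haL, haS⟩ := mem_sdiff.1 ha
      refine mem_sdiff.2 ⟨lam.isLowerSet hba haL, fun hbS => haS ?_⟩
      obtain ⟨z, hz, haz⟩ := mem_biUnion.1 haL
      exact hS.out hbS hz ⟨hba, mem_Iic.1 haz⟩⟩
  exact ⟨lam, nu, sdiff_subset, (Finset.sdiff_sdiff_eq_self hSlam).symm⟩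

theorem semistdOn_of_ordConnected {S : Finset (ℕ × ℕ)} {T : ℕ × ℕ → ℕ}
    (hS : (S : Set (ℕ × ℕ)).OrdConnected) (hpos : ∀ x ∈ S, 1 ≤ T x) (hzero : ∀ x, x ∉ S → T x = 0)
    (hrow : ∀ r c, (r, c) ∈ S → (r, c + 1) ∈ S → T (r, c) ≤ T (r, c + 1))
    (hcol : ∀ r c, (r, c) ∈ S → (r + 1, c) ∈ S → T (r, c) < T (r + 1, c)) :
    SemistdOn S T := by
  refine ⟨hpos, hzero, fun r c₁ c₂ h₁ h₂ hle => ?_, fun r₁ r₂ c h₁ h₂ hlt => ?_⟩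
  · have hI : {c | (r, c) ∈ S}.OrdConnected :=
      ⟨fun a ha b hb x hx => hS.out ha hb ⟨⟨le_rfl, hx.1⟩, ⟨le_rfl, hx.2⟩⟩⟩
    exact monotoneOn_of_le_add_one hI (fun a _ ha ha1 => hrow r a ha ha1) h₁ h₂ hle
  · have hI : {r | (r, c) ∈ S}.OrdConnected :=
      ⟨fun a ha b hb x hx => hS.out ha hb ⟨⟨hx.1, le_rfl⟩, ⟨hx.2, le_rfl⟩⟩⟩
    exact strictMonoOn_of_lt_add_one hI (fun a _ ha ha1 => hcol a c ha ha1) h₁ h₂ hlt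

section ShiftedContent

variable {k : ℕ}

theorem shiftedContent_ediv (x : Fin k × ℕ × ℕ) : shiftedContent k x / k = cellContent x.2 := by
  have hk : (0 : ℤ) < k := by have := x.1.isLt; omega
  rw [shiftedContent, add_comm, Int.add_mul_ediv_left _ _ hk.ne',
    Int.ediv_eq_zero_of_lt (by omega) (by exact_mod_cast x.1.isLt), zero_add]

theorem shiftedContent_emod (x : Fin k × ℕ × ℕ) : shiftedContent k x % k = x.1 := by
  rw [shiftedContent, Int.mul_add_emod_self_left]
  exact Int.emod_eq_of_lt (by omega) (by exact_mod_cast x.1.isLt)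

theorem shiftedContent_eq_iff {x y : Fin k × ℕ × ℕ} :
    shiftedContent k x = shiftedContent k y ↔ x.1 = y.1 ∧ cellContent x.2 = cellContent y.2 := by
  refine ⟨fun h => ⟨?_, ?_⟩, fun ⟨h₁, h₂⟩ => by rw [shiftedContent, shiftedContent, h₁, h₂]⟩
  · have := shiftedContent_emod x
    rw [h, shiftedContent_emod y] at this
    exact Fin.ext (by exact_mod_cast this.symm)
  · rw [← shiftedContent_ediv x, ← shiftedContent_ediv y, h]

theorem shiftedContent_row_succ (i : Fin k) (r c : ℕ) :
    shiftedContent k (i, (r + 1, c)) = shiftedContent k (i, (r, c)) - k := by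
  simp only [shiftedContent, cellContent]; push_cast; ring

theorem shiftedContent_col_succ (i : Fin k) (r c : ℕ) :
    shiftedContent k (i, (r, c + 1)) = shiftedContent k (i, (r, c)) + k := by
  simp only [shiftedContent, cellContent]; push_cast; ring

theorem monotone_sub_shiftedContent {f : ℤ → ℤ} (hf : ∀ ζ, f (ζ + k) ≤ f ζ ∧ f ζ ≤ f (ζ + k) + 1)
    (i : Fin k) : Monotone fun x : ℕ × ℕ => (x.1 : ℤ) - f (shiftedContent k (i, x)) := by
  have hrow : ∀ col : ℕ, Monotone fun r : ℕ => (r : ℤ) - f (shiftedContent k (i, (r, col))) :=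
    fun col => monotone_nat_of_le_succ fun r => by
      have := (hf (shiftedContent k (i, (r, col)) - k)).2
      rw [sub_add_cancel] at this
      rw [shiftedContent_row_succ]
      push_cast
      linarith
  have hcol : ∀ r : ℕ, Monotone fun col : ℕ => (r : ℤ) - f (shiftedContent k (i, (r, col))) :=
    fun r => monotone_nat_of_le_succ fun col => by
      have := (hf (shiftedContent k (i, (r, col)))).1
      rw [shiftedContent_col_succ]
      linarith
  exact fun x y hxy => (hrow x.2 hxy.1).trans (hcol y.1 hxy.2)

end ShiftedContent

def readingKey (k : ℕ) (x : Fin k × ℕ × ℕ) : ℤ ×ₗ ℕ := toLex (shiftedContent k x, x.2.2)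

section CellEnum

variable {k n : ℕ} {S : Fin k → Finset (ℕ × ℕ)} {e : ℕ → Fin k × ℕ × ℕ}

theorem readingKey_lt_readingKey_iff {x y : Fin k × ℕ × ℕ} :
    readingKey k x < readingKey k y ↔
      shiftedContent k x < shiftedContent k y ∨
        shiftedContent k x = shiftedContent k y ∧ x.2.2 < y.2.2 :=
  Prod.Lex.toLex_lt_toLex

theorem IsCellEnum.strictMonoOn (he : IsCellEnum k n S e) :
    StrictMonoOn (fun p => readingKey k (e p)) (Set.Icc 1 n) :=
  fun p hp q hq hpq => readingKey_lt_readingKey_iff.2 (he.2 p q hp hq hpq)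

theorem IsCellEnum.not_between (he : IsCellEnum k n S e) {p : ℕ} (hp : p ∈ Set.Icc 1 n)
    (hp' : p + 1 ∈ Set.Icc 1 n) {z : Fin k × ℕ × ℕ} (hz : z.2 ∈ S z.1)
    (h₁ : readingKey k (e p) < readingKey k z) : ¬readingKey k z < readingKey k (e (p + 1)) := by
  obtain ⟨q, hq, rfl⟩ := he.1.surjOn hz
  intro h₂
  have := (he.strictMonoOn.lt_iff_lt hp hq).1 h₁
  have := (he.strictMonoOn.lt_iff_lt hq hp').1 h₂
  omega

theorem IsCellEnum.exists_eq (he : IsCellEnum k n S e) {i : Fin k} {z : ℕ × ℕ} (hz : z ∈ S i) :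
    ∃ q ∈ Set.Icc 1 n, e q = (i, z) :=
  he.1.surjOn (show ((i, z) : Fin k × ℕ × ℕ).2 ∈ S i from hz)

theorem IsCellEnum.succ_eq (hS : ∀ i, (S i : Set (ℕ × ℕ)).OrdConnected)
    (he : IsCellEnum k n S e) {p : ℕ} (hp : p ∈ Set.Icc 1 n) (hp' : p + 1 ∈ Set.Icc 1 n)
    {i : Fin k} {r c : ℕ} (hep : e p = (i, (r, c)))
    (hsc : shiftedContent k (e p) = shiftedContent k (e (p + 1))) :
    e (p + 1) = (i, (r + 1, c + 1)) := by
  have hlt := he.2 p (p + 1) hp hp' (Nat.lt_succ_self p)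
  have hx := he.1.mapsTo hp
  have hy := he.1.mapsTo hp'
  rcases hey : e (p + 1) with ⟨i', r', c'⟩
  rw [hep] at hsc hlt hx
  rw [hey] at hsc hlt hy
  obtain ⟨rfl, hcont⟩ := shiftedContent_eq_iff.1 hsc
  simp only [hsc, lt_irrefl, true_and, false_or] at hlt
  simp only [cellContent] at hcont
  -- otherwise `(r + 1, c + 1)`, which lies in the shape between them, is read between them
  by_contra hne
  have hz : (r + 1, c + 1) ∈ S i :=
    (hS i).out hx hy ⟨⟨by simp, by simp⟩, ⟨by simp; omega, by simp; omega⟩⟩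
  have hzsc : shiftedContent k (i, (r + 1, c + 1)) = shiftedContent k (i, (r, c)) :=
    shiftedContent_eq_iff.2 ⟨rfl, by simp only [cellContent]; push_cast; ring⟩
  have hcz : c + 1 < c' := by
    simp only [Prod.mk.injEq, true_and] at hne
    omega
  exact he.not_between hp hp' hz
    (by rw [hep]; exact readingKey_lt_readingKey_iff.2 (Or.inr ⟨hzsc.symm, by simp⟩))
    (by rw [hey]; exact readingKey_lt_readingKey_iff.2 (Or.inr ⟨hzsc.trans hsc, hcz⟩))

end CellEnum

theorem isRibbonWord_of_cellEnum {k n : ℕ} {w : ℕ → ℕ} {c : ℕ → ℤ} {S : Fin k → Finset (ℕ × ℕ)}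
    {T : Fin k → ℕ × ℕ → ℕ} {e : ℕ → Fin k × ℕ × ℕ} (hS : ∀ i, IsSkewShape (S i))
    (hT : SemistdTuple S T) (he : IsCellEnum k n S e)
    (hmatch : ∀ p ∈ Set.Icc 1 n, w p = T (e p).1 (e p).2 ∧ c p = shiftedContent k (e p)) :
    IsRibbonWord k n w c := by
  intro p hp₁ hpn hcp
  have hp : p ∈ Set.Icc 1 n := ⟨hp₁, by omega⟩
  have hp' : p + 1 ∈ Set.Icc 1 n := ⟨by omega, hpn⟩
  rcases hep : e p with ⟨i, r, col⟩
  have hsucc := he.succ_eq (fun i => (hS i).ordConnected) hp hp' hep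
    (by rw [← (hmatch p hp).2, ← (hmatch _ hp').2, hcp])
  have hx : (r, col) ∈ S i := by simpa [hep] using he.1.mapsTo hp
  have hy : (r + 1, col + 1) ∈ S i := by simpa [hsucc] using he.1.mapsTo hp'
  have hin : ∀ a b, r ≤ a → a ≤ r + 1 → col ≤ b → b ≤ col + 1 → (a, b) ∈ S i :=
    fun a b h₁ h₂ h₃ h₄ => (hS i).ordConnected.out hx hy ⟨⟨h₁, h₃⟩, ⟨h₂, h₄⟩⟩
  obtain ⟨-, -, hrow, hcol⟩ := hT i
  have hwp : w p = T i (r, col) := by rw [(hmatch p hp).1, hep]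
  have hwp' : w (p + 1) = T i (r + 1, col + 1) := by rw [(hmatch _ hp').1, hsucc]
  have hcp' : c p = shiftedContent k (i, (r, col)) := by rw [(hmatch p hp).2, hep]
  -- the cells above and to the right of `e p` provide the letters `w h` and `w j`
  have hup := hin (r + 1) col (by omega) le_rfl le_rfl (by omega)
  have hright := hin r (col + 1) le_rfl (by omega) (by omega) le_rfl
  obtain ⟨h, hh, heh⟩ := he.exists_eq hup
  obtain ⟨j, hj, hej⟩ := he.exists_eq hright
  refine ⟨⟨h, hh, ?_, ?_, ?_⟩, ⟨j, hj, ?_, ?_, ?_⟩⟩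
  · rw [(hmatch h hh).2, heh, hcp', shiftedContent_row_succ]
  · rw [hwp, (hmatch h hh).1, heh]
    exact hcol r (r + 1) col hx hup (by omega)
  · rw [hwp', (hmatch h hh).1, heh]
    exact hrow (r + 1) col (col + 1) hup hy (by omega)
  · rw [(hmatch j hj).2, hej, hcp', shiftedContent_col_succ]
  · rw [hwp, (hmatch j hj).1, hej]
    exact hrow r col (col + 1) hx hright (by omega)
  · rw [hwp', (hmatch j hj).1, hej]
    exact hcol r (r + 1) (col + 1) hright hy (by omega)

section Diagonal

variable {k n : ℕ} {w : ℕ → ℕ} {c : ℕ → ℤ}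

def diagPos (n : ℕ) (c : ℕ → ℤ) (ζ : ℤ) : Finset ℕ := {p ∈ Icc 1 n | c p = ζ}

def diagIndex (n : ℕ) (c : ℕ → ℤ) (p : ℕ) : ℕ := #{q ∈ diagPos n c (c p) | q < p}

def diagCountLE (n : ℕ) (w : ℕ → ℕ) (c : ℕ → ℤ) (ζ : ℤ) (v : ℕ) : ℕ :=
  #{p ∈ diagPos n c ζ | w p ≤ v}

def DiagDrop (k n : ℕ) (w : ℕ → ℕ) (c : ℕ → ℤ) (ζ : ℤ) : Prop :=
  ∃ q ∈ diagPos n c (ζ + k), ∀ p ∈ diagPos n c ζ, w q < w p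

theorem mem_diagPos {ζ : ℤ} {p : ℕ} : p ∈ diagPos n c ζ ↔ p ∈ Set.Icc 1 n ∧ c p = ζ := by
  simp [diagPos]

theorem diagPos_ordConnected (hc : MonotoneOn c (Set.Icc 1 n)) (ζ : ℤ) :
    (diagPos n c ζ : Set ℕ).OrdConnected := by
  refine ⟨fun p hp q hq r hr => ?_⟩
  rw [mem_coe, mem_diagPos] at hp hq ⊢
  have hr' : r ∈ Set.Icc 1 n := ⟨hp.1.1.trans hr.1, hr.2.trans hq.1.2⟩
  exact ⟨hr', le_antisymm (hq.2 ▸ hc hr' hq.1 hr.2) (hp.2 ▸ hc hp.1 hr' hr.1)⟩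

theorem strictMonoOn_diagPos (hc : MonotoneOn c (Set.Icc 1 n)) (hr : IsRibbonWord k n w c)
    (ζ : ℤ) : StrictMonoOn w (diagPos n c ζ) := by
  refine strictMonoOn_of_lt_add_one (diagPos_ordConnected hc ζ) fun p _ hp hp' => ?_
  rw [mem_coe, mem_diagPos] at hp hp'
  obtain ⟨⟨h, -, -, h₁, h₂⟩, -⟩ := hr p hp.1.1 hp'.1.2 (hp.2.trans hp'.2.symm)
  exact h₁.trans_le h₂

theorem exists_mem_diagPos_add_between (hc : MonotoneOn c (Set.Icc 1 n))
    (hr : IsRibbonWord k n w c) {ζ : ℤ} {p q : ℕ} (hp : p ∈ diagPos n c ζ) (hq : q ∈ diagPos n c ζ)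
    (hpq : p < q) : ∃ j ∈ diagPos n c (ζ + k), w p ≤ w j ∧ w j < w q := by
  have hp' : p + 1 ∈ diagPos n c ζ := (diagPos_ordConnected hc ζ).out hp hq ⟨by omega, hpq⟩
  have hle : w (p + 1) ≤ w q := (strictMonoOn_diagPos hc hr ζ).monotoneOn hp' hq hpq
  rw [mem_diagPos] at hp hp'
  obtain ⟨-, ⟨j, hj, hcj, h₁, h₂⟩⟩ := hr p hp.1.1 hp'.1.2 (hp.2.trans hp'.2.symm)
  exact ⟨j, mem_diagPos.2 ⟨hj, hp.2 ▸ hcj⟩, h₁, h₂.trans_le hle⟩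

theorem exists_mem_diagPos_sub_between (hc : MonotoneOn c (Set.Icc 1 n))
    (hr : IsRibbonWord k n w c) {ζ : ℤ} {p q : ℕ} (hp : p ∈ diagPos n c (ζ + k))
    (hq : q ∈ diagPos n c (ζ + k)) (hpq : p < q) : ∃ h ∈ diagPos n c ζ, w p < w h ∧ w h ≤ w q := by
  have hp' : p + 1 ∈ diagPos n c (ζ + k) := (diagPos_ordConnected hc _).out hp hq ⟨by omega, hpq⟩
  have hle : w (p + 1) ≤ w q := (strictMonoOn_diagPos hc hr _).monotoneOn hp' hq hpq
  rw [mem_diagPos] at hp hp'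
  obtain ⟨⟨h, hh, hch, h₁, h₂⟩, -⟩ := hr p hp.1.1 hp'.1.2 (hp.2.trans hp'.2.symm)
  exact ⟨h, mem_diagPos.2 ⟨hh, by rw [hch, hp.2]; ring⟩, h₁, h₂.trans hle⟩

theorem diagIndex_eq {ζ : ℤ} {p : ℕ} (hp : p ∈ diagPos n c ζ) :
    diagIndex n c p = #{q ∈ diagPos n c ζ | q < p} := by
  rw [diagIndex, (mem_diagPos.1 hp).2]

theorem diagIndex_lt_diagIndex {ζ : ℤ} {p q : ℕ} (hp : p ∈ diagPos n c ζ) (hq : q ∈ diagPos n c ζ)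
    (hpq : p < q) : diagIndex n c p < diagIndex n c q := by
  rw [diagIndex_eq hp, diagIndex_eq hq]
  refine card_lt_card ⟨monotone_filter_right _ fun r _ hr => hr.trans hpq, fun h => ?_⟩
  simpa using h (mem_filter.2 ⟨hp, hpq⟩)

theorem diagIndex_injOn (ζ : ℤ) : Set.InjOn (diagIndex n c) (diagPos n c ζ) := by
  intro p hp q hq h
  by_contra hne
  rcases Nat.lt_or_gt_of_ne hne with hpq | hpq
  · exact (diagIndex_lt_diagIndex hp hq hpq).ne h
  · exact (diagIndex_lt_diagIndex hq hp hpq).ne' h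

theorem diagIndex_lt_card {ζ : ℤ} {p : ℕ} (hp : p ∈ diagPos n c ζ) :
    diagIndex n c p < #(diagPos n c ζ) := by
  rw [diagIndex_eq hp]
  exact card_lt_card (filter_ssubset.2 ⟨p, hp, lt_irrefl p⟩)

theorem exists_diagIndex_eq (ζ : ℤ) {t : ℕ} (ht : t < #(diagPos n c ζ)) :
    ∃ p ∈ diagPos n c ζ, diagIndex n c p = t := by
  have hmaps : Set.MapsTo (diagIndex n c) (diagPos n c ζ) (range #(diagPos n c ζ)) :=
    fun p hp => mem_coe.2 (mem_range.2 (diagIndex_lt_card hp))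
  simpa using surjOn_of_injOn_of_card_le _ hmaps (diagIndex_injOn ζ) (by simp)
    (mem_coe.2 (mem_range.2 ht))

theorem diagIndex_succ {ζ : ℤ} {q : ℕ} (hq : q ∈ diagPos n c ζ) (hq' : q + 1 ∈ diagPos n c ζ) :
    diagIndex n c (q + 1) = diagIndex n c q + 1 := by
  rw [diagIndex_eq hq, diagIndex_eq hq', ← card_insert_of_notMem
    (by simp : q ∉ {r ∈ diagPos n c ζ | r < q})]
  congr 1
  ext r
  simp only [mem_filter, mem_insert]
  constructor
  · rintro ⟨hr, hrq⟩
    rcases Nat.lt_succ_iff_lt_or_eq.1 hrq with h | rfl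
    · exact Or.inr ⟨hr, h⟩
    · exact Or.inl rfl
  · rintro (rfl | ⟨hr, h⟩)
    · exact ⟨hq, Nat.lt_succ_self r⟩
    · exact ⟨hr, h.trans (Nat.lt_succ_self q)⟩

theorem diagIndex_eq_zero {ζ : ℤ} {q : ℕ} (hq : q ∈ diagPos n c ζ)
    (hmin : ∀ q' ∈ diagPos n c ζ, q ≤ q') : diagIndex n c q = 0 := by
  rw [diagIndex_eq hq, card_eq_zero, filter_eq_empty_iff]
  exact fun q' hq' => (hmin q' hq').not_gt

end Diagonal

section Interlacing

variable {k n : ℕ} {w : ℕ → ℕ} {c : ℕ → ℤ}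

/-- Two entries of diagonal `ζ` are separated by an entry of diagonal `ζ + k`, so a set `P` of
values with no entry of diagonal `ζ + k` between two of its members holds at most one entry of
diagonal `ζ`. -/
theorem card_filter_diagPos_le_one (hc : MonotoneOn c (Set.Icc 1 n))
    (hr : IsRibbonWord k n w c) {ζ : ℤ} (P : ℕ → Prop) [DecidablePred P]
    (hP : ∀ j ∈ diagPos n c (ζ + k), ∀ u v, P u → P v → u ≤ w j → w j < v → False) :
    #{p ∈ diagPos n c ζ | P (w p)} ≤ 1 := by
  refine card_le_one.2 fun a ha b hb => ?_
  rw [mem_filter] at ha hb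
  by_contra hab
  rcases Nat.lt_or_gt_of_ne hab with h | h
  · obtain ⟨j, hj, h₁, h₂⟩ := exists_mem_diagPos_add_between hc hr ha.1 hb.1 h
    exact hP j hj _ _ ha.2 hb.2 h₁ h₂
  · obtain ⟨j, hj, h₁, h₂⟩ := exists_mem_diagPos_add_between hc hr hb.1 ha.1 h
    exact hP j hj _ _ hb.2 ha.2 h₁ h₂

theorem diagCountLE_succ (hc : MonotoneOn c (Set.Icc 1 n)) (hr : IsRibbonWord k n w c)
    {ζ : ℤ} {q : ℕ} (hq : q ∈ diagPos n c (ζ + k)) (hq' : q + 1 ∈ diagPos n c (ζ + k)) :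
    diagCountLE n w c ζ (w (q + 1)) = diagCountLE n w c ζ (w q) + 1 := by
  have hmono := strictMonoOn_diagPos hc hr (ζ + k)
  have hlt : w q < w (q + 1) := hmono hq hq' (Nat.lt_succ_self q)
  have hsplit := card_filter_add_card_filter_not
    (s := {p ∈ diagPos n c ζ | w p ≤ w (q + 1)}) (fun p => w p ≤ w q)
  rw [filter_filter, filter_filter,
    filter_congr (q := fun p => w p ≤ w q) fun p _ => ⟨And.right, fun h => ⟨by omega, h⟩⟩]
    at hsplit
  have hgap : #{p ∈ diagPos n c ζ | w p ≤ w (q + 1) ∧ ¬w p ≤ w q} = 1 := by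
    refine le_antisymm (card_filter_diagPos_le_one hc hr (fun v => v ≤ w (q + 1) ∧ ¬v ≤ w q)
      fun j hj u v hu hv huj hjv => ?_) ?_
    · have := (hmono.lt_iff_lt hq hj).1 (by omega)
      have := (hmono.lt_iff_lt hj hq').1 (by omega)
      omega
    · obtain ⟨h, hh, h₁, h₂⟩ := exists_mem_diagPos_sub_between hc hr hq hq' (Nat.lt_succ_self q)
      exact card_pos.2 ⟨h, mem_filter.2 ⟨hh, h₂, by omega⟩⟩
  unfold diagCountLE
  omega

theorem diagCountLE_add_drop_of_min (hc : MonotoneOn c (Set.Icc 1 n))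
    (hr : IsRibbonWord k n w c) {ζ : ℤ} {q : ℕ} (hq : q ∈ diagPos n c (ζ + k))
    (hmin : ∀ q' ∈ diagPos n c (ζ + k), q ≤ q') :
    diagCountLE n w c ζ (w q) + (if DiagDrop k n w c ζ then 1 else 0) = 1 := by
  have hmono := strictMonoOn_diagPos hc hr (ζ + k)
  split_ifs with hdrop
  · obtain ⟨q₀, hq₀, hlt⟩ := hdrop
    have : diagCountLE n w c ζ (w q) = 0 := card_eq_zero.2 <| filter_eq_empty_iff.2 fun p hp =>
      not_le.2 ((hmono.monotoneOn hq hq₀ (hmin q₀ hq₀)).trans_lt (hlt p hp))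
    omega
  · have hle : diagCountLE n w c ζ (w q) ≤ 1 := card_filter_diagPos_le_one hc hr (· ≤ w q)
      fun j hj u v _ hv _ hjv => (hmin j hj).not_gt ((hmono.lt_iff_lt hj hq).1 (by omega))
    have hpos : diagCountLE n w c ζ (w q) ≠ 0 := fun h0 => hdrop
      ⟨q, hq, fun p hp => not_le.1 fun hle => (filter_eq_empty_iff.1 (card_eq_zero.1 h0)) hp hle⟩
    omega

theorem diagCountLE_add_drop (hc : MonotoneOn c (Set.Icc 1 n)) (hr : IsRibbonWord k n w c)
    {ζ : ℤ} {q : ℕ} (hq : q ∈ diagPos n c (ζ + k)) :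
    diagCountLE n w c ζ (w q) + (if DiagDrop k n w c ζ then 1 else 0) = diagIndex n c q + 1 := by
  induction q with
  | zero => simp [mem_diagPos] at hq
  | succ q ih =>
    by_cases hq' : q ∈ diagPos n c (ζ + k)
    · rw [diagCountLE_succ hc hr hq' hq, diagIndex_succ hq' hq]
      have := ih hq'
      omega
    · have hmin : ∀ q' ∈ diagPos n c (ζ + k), q + 1 ≤ q' := fun q' hq'' => by
        by_contra h
        exact hq' ((diagPos_ordConnected hc _).out hq'' hq ⟨by omega, by omega⟩)
      rw [diagCountLE_add_drop_of_min hc hr hq hmin, diagIndex_eq_zero hq hmin]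

theorem card_diagPos_add_le (hc : MonotoneOn c (Set.Icc 1 n)) (hr : IsRibbonWord k n w c)
    (ζ : ℤ) :
    #(diagPos n c (ζ + k)) ≤ #(diagPos n c ζ) + if DiagDrop k n w c ζ then 1 else 0 := by
  rcases Nat.eq_zero_or_pos #(diagPos n c (ζ + k)) with h | h
  · omega
  · obtain ⟨q, hq, hidx⟩ := exists_diagIndex_eq (ζ + k) (Nat.sub_lt h one_pos)
    have := diagCountLE_add_drop hc hr hq
    have : diagCountLE n w c ζ (w q) ≤ #(diagPos n c ζ) := card_filter_le _ _
    omega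

theorem card_diagPos_le (hc : MonotoneOn c (Set.Icc 1 n)) (hr : IsRibbonWord k n w c)
    (ζ : ℤ) :
    #(diagPos n c ζ) + (if DiagDrop k n w c ζ then 1 else 0) ≤ #(diagPos n c (ζ + k)) + 1 := by
  rcases Nat.eq_zero_or_pos #(diagPos n c (ζ + k)) with h | h
  · have hY : diagPos n c (ζ + k) = ∅ := card_eq_zero.1 h
    have hndrop : ¬DiagDrop k n w c ζ := fun ⟨q, hq, _⟩ => by simp [hY] at hq
    have := card_filter_diagPos_le_one hc hr (ζ := ζ) (fun _ => True)
      fun j hj => by simp [hY] at hj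
    rw [filter_true] at this
    simp only [hndrop, if_false]
    omega
  · obtain ⟨q, hq, hidx⟩ := exists_diagIndex_eq (ζ + k) (Nat.sub_lt h one_pos)
    have hmax : ∀ j ∈ diagPos n c (ζ + k), j ≤ q := fun j hj => by
      by_contra hjq
      have := diagIndex_lt_diagIndex hq hj (by omega)
      have := diagIndex_lt_card hj
      omega
    have hgap := card_filter_diagPos_le_one hc hr (ζ := ζ) (fun v => ¬v ≤ w q)
      fun j hj u _ hu _ huj _ =>
        hu (huj.trans ((strictMonoOn_diagPos hc hr _).monotoneOn hj hq (hmax j hj)))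
    have hsplit := card_filter_add_card_filter_not (s := diagPos n c ζ) (fun p => w p ≤ w q)
    have := diagCountLE_add_drop hc hr hq
    unfold diagCountLE at this
    omega

theorem le_of_diagIndex_lt_diagCountLE (hc : MonotoneOn c (Set.Icc 1 n))
    (hr : IsRibbonWord k n w c) {ζ : ℤ} {p v : ℕ} (hp : p ∈ diagPos n c ζ)
    (h : diagIndex n c p < diagCountLE n w c ζ v) : w p ≤ v := by
  rw [diagIndex_eq hp] at h
  by_contra hlt
  refine h.not_ge (card_le_card fun p' hp' => ?_)
  rw [mem_filter] at hp' ⊢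
  exact ⟨hp'.1, ((strictMonoOn_diagPos hc hr ζ).lt_iff_lt hp'.1 hp).1 (by omega)⟩

theorem lt_of_diagCountLE_le_diagIndex (hc : MonotoneOn c (Set.Icc 1 n))
    (hr : IsRibbonWord k n w c) {ζ : ℤ} {p v : ℕ} (hp : p ∈ diagPos n c ζ)
    (h : diagCountLE n w c ζ v ≤ diagIndex n c p) : v < w p := by
  rw [diagIndex_eq hp] at h
  by_contra hle
  refine h.not_gt (card_lt_card ⟨fun p' hp' => ?_, fun hsub => ?_⟩)
  · rw [mem_filter] at hp' ⊢
    exact ⟨hp'.1, ((strictMonoOn_diagPos hc hr ζ) hp'.1 hp hp'.2).le.trans (by omega)⟩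
  · simpa using hsub (mem_filter.2 ⟨hp, by omega⟩)

end Interlacing

noncomputable section Construction

variable {k n : ℕ} {w : ℕ → ℕ} {c : ℕ → ℤ}

def contentBound (n : ℕ) (c : ℕ → ℤ) : ℕ := (Icc 1 n).sup fun p => (c p).natAbs

/-- Diagonal `ζ` will occupy the rows from `startRow ζ` on. Going from diagonal `ζ + k` to
diagonal `ζ`, the start row increases by one exactly at a drop; the offset `contentBound` keeps
all columns nonnegative. -/
def startRow (k n : ℕ) (w : ℕ → ℕ) (c : ℕ → ℤ) (ζ : ℤ) : ℕ :=
  contentBound n c + #{e ∈ (Icc 1 n).image c | ζ < e ∧ (k : ℤ) ∣ e - ζ ∧ DiagDrop k n w c (e - k)}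

theorem startRow_eq (hk : 0 < k) (ζ : ℤ) :
    startRow k n w c ζ = startRow k n w c (ζ + k) + if DiagDrop k n w c ζ then 1 else 0 := by
  unfold startRow
  set F := {e ∈ (Icc 1 n).image c | ζ < e ∧ (k : ℤ) ∣ e - ζ ∧ DiagDrop k n w c (e - k)}
  have hsplit := card_filter_add_card_filter_not (s := F) (fun e => e = ζ + k)
  have hrest : {e ∈ F | ¬e = ζ + k} =
      {e ∈ (Icc 1 n).image c | ζ + k < e ∧ (k : ℤ) ∣ e - (ζ + k) ∧ DiagDrop k n w c (e - k)} := by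
    rw [filter_filter]
    refine filter_congr fun e _ => ⟨fun ⟨⟨hζ, hdvd, hd⟩, hne⟩ => ⟨?_, ?_, hd⟩, fun ⟨hζ, hdvd, hd⟩ =>
      ⟨⟨by omega, by rw [← sub_add_cancel (e - ζ) k, sub_sub]; exact dvd_add hdvd dvd_rfl, hd⟩,
        by omega⟩⟩
    · have := Int.le_of_dvd (by omega) hdvd
      omega
    · simpa [sub_add_eq_sub_sub] using dvd_sub hdvd (dvd_refl (k : ℤ))
  have htop : #{e ∈ F | e = ζ + k} = if DiagDrop k n w c ζ then 1 else 0 := by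
    split_ifs with hd
    · refine card_eq_one.2 ⟨ζ + k, eq_singleton_iff_unique_mem.2 ⟨?_, fun e he => (mem_filter.1 he).2⟩⟩
      have ⟨q, hq, _⟩ := hd
      obtain ⟨hq, hcq⟩ := mem_diagPos.1 hq
      exact mem_filter.2 ⟨mem_filter.2 ⟨mem_image.2 ⟨q, by simpa using hq, hcq⟩, by omega,
        by simp, by simpa using hd⟩, rfl⟩
    · refine card_eq_zero.2 (filter_eq_empty_iff.2 fun e he he' => hd ?_)
      simpa [he'] using (mem_filter.1 he).2.2.2
  rw [← hrest]
  omega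

def row (k n : ℕ) (w : ℕ → ℕ) (c : ℕ → ℤ) (p : ℕ) : ℕ := startRow k n w c (c p) + diagIndex n c p

def cell (k n : ℕ) (w : ℕ → ℕ) (c : ℕ → ℤ) (p : ℕ) : ℕ × ℕ :=
  (row k n w c p, ((row k n w c p : ℤ) + c p / k).toNat)

def tabIndex (hk : 0 < k) (c : ℕ → ℤ) (p : ℕ) : Fin k :=
  ⟨(c p % k).toNat, by have := Int.emod_lt_of_pos (c p) (by omega : (0 : ℤ) < k); omega⟩

def cellEnum (hk : 0 < k) (n : ℕ) (w : ℕ → ℕ) (c : ℕ → ℤ) (p : ℕ) : Fin k × ℕ × ℕ :=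
  (tabIndex hk c p, cell k n w c p)

theorem row_add_ediv_nonneg (hk : 0 < k) {p : ℕ} (hp : p ∈ Set.Icc 1 n) :
    0 ≤ (row k n w c p : ℤ) + c p / k := by
  have hbound : (c p).natAbs ≤ row k n w c p :=
    (le_sup (f := fun p => (c p).natAbs) (mem_Icc.2 hp)).trans (Nat.le_add_right _ _ |>.trans
      (Nat.le_add_right _ _))
  have hdiv : -|c p| ≤ c p / k := (Int.le_ediv_iff_mul_le (by omega)).2 (by
    nlinarith [neg_abs_le (c p), abs_nonneg (c p), (by exact_mod_cast hk : (1 : ℤ) ≤ k)])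
  have : ((c p).natAbs : ℤ) = |c p| := Int.natCast_natAbs (c p)
  omega

theorem shiftedContent_cellEnum (hk : 0 < k) {p : ℕ} (hp : p ∈ Set.Icc 1 n) :
    shiftedContent k (cellEnum hk n w c p) = c p := by
  simp only [shiftedContent, cellEnum, cell, tabIndex, cellContent]
  rw [Int.toNat_of_nonneg (row_add_ediv_nonneg hk hp),
    Int.toNat_of_nonneg (Int.emod_nonneg _ (by omega))]
  have := Int.mul_ediv_add_emod (c p) k
  linarith

theorem le_of_row_eq (hk : 0 < k) (hc : MonotoneOn c (Set.Icc 1 n)) (hr : IsRibbonWord k n w c)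
    {ζ : ℤ} {p q : ℕ} (hp : p ∈ diagPos n c ζ) (hq : q ∈ diagPos n c (ζ + k))
    (h : row k n w c p = row k n w c q) : w p ≤ w q := by
  have hcount := diagCountLE_add_drop hc hr hq
  have hstart := startRow_eq (n := n) (w := w) (c := c) hk ζ
  rw [row, row, (mem_diagPos.1 hp).2, (mem_diagPos.1 hq).2] at h
  refine le_of_diagIndex_lt_diagCountLE hc hr hp ?_
  split_ifs at hcount hstart <;> omega

theorem lt_of_row_eq_add_one (hk : 0 < k) (hc : MonotoneOn c (Set.Icc 1 n))
    (hr : IsRibbonWord k n w c) {ζ : ℤ} {p q : ℕ} (hp : p ∈ diagPos n c ζ)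
    (hq : q ∈ diagPos n c (ζ + k)) (h : row k n w c p = row k n w c q + 1) : w q < w p := by
  have hcount := diagCountLE_add_drop hc hr hq
  have hstart := startRow_eq (n := n) (w := w) (c := c) hk ζ
  rw [row, row, (mem_diagPos.1 hp).2, (mem_diagPos.1 hq).2] at h
  refine lt_of_diagCountLE_le_diagIndex hc hr hp ?_
  split_ifs at hcount hstart <;> omega

def shape (hk : 0 < k) (n : ℕ) (w : ℕ → ℕ) (c : ℕ → ℤ) (i : Fin k) : Finset (ℕ × ℕ) :=
  {p ∈ Icc 1 n | tabIndex hk c p = i}.image (cell k n w c)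

theorem mem_shape_iff (hk : 0 < k) {i : Fin k} {x : ℕ × ℕ} :
    x ∈ shape hk n w c i ↔
      startRow k n w c (shiftedContent k (i, x)) ≤ x.1 ∧
        x.1 < startRow k n w c (shiftedContent k (i, x)) +
          #(diagPos n c (shiftedContent k (i, x))) := by
  constructor
  · intro hx
    obtain ⟨p, hp, rfl⟩ := mem_image.1 hx
    obtain ⟨hpI, rfl⟩ := mem_filter.1 hp
    have hsc := shiftedContent_cellEnum (w := w) (c := c) hk (mem_Icc.1 hpI)
    rw [cellEnum] at hsc
    rw [hsc]
    exact ⟨Nat.le_add_right _ _,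
      Nat.add_lt_add_left (diagIndex_lt_card (mem_diagPos.2 ⟨mem_Icc.1 hpI, rfl⟩)) _⟩
  · rintro ⟨h₁, h₂⟩
    obtain ⟨p, hp, hidx⟩ := exists_diagIndex_eq (n := n) (c := c) _ (Nat.sub_lt_left_of_lt_add h₁ h₂)
    obtain ⟨hpI, hcp⟩ := mem_diagPos.1 hp
    refine mem_image.2 ⟨p, mem_filter.2 ⟨mem_Icc.2 hpI, Fin.ext ?_⟩, ?_⟩
    · simp [tabIndex, hcp, shiftedContent_emod]
    · have hrow : row k n w c p = x.1 := by rw [row, hidx, hcp]; omega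
      have hdiv := shiftedContent_ediv (i, x)
      simp only [cellContent] at hdiv
      simp only [cell, hrow, hcp, hdiv]
      ext <;> simp

theorem exists_mem_diagPos_of_mem_shape (hk : 0 < k) {i : Fin k} {x : ℕ × ℕ}
    (hx : x ∈ shape hk n w c i) :
    ∃ p ∈ diagPos n c (shiftedContent k (i, x)), cellEnum hk n w c p = (i, x) := by
  obtain ⟨p, hp, rfl⟩ := mem_image.1 hx
  obtain ⟨hpI, rfl⟩ := mem_filter.1 hp
  exact ⟨p, mem_diagPos.2 ⟨mem_Icc.1 hpI, (shiftedContent_cellEnum hk (mem_Icc.1 hpI)).symm⟩, rfl⟩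

theorem shape_ordConnected (hk : 0 < k) (hc : MonotoneOn c (Set.Icc 1 n))
    (hr : IsRibbonWord k n w c) (i : Fin k) : (shape hk n w c i : Set (ℕ × ℕ)).OrdConnected := by
  have hA : ∀ ζ, (startRow k n w c (ζ + k) : ℤ) ≤ startRow k n w c ζ ∧
      (startRow k n w c ζ : ℤ) ≤ startRow k n w c (ζ + k) + 1 := fun ζ => by
    have := startRow_eq (n := n) (w := w) (c := c) hk ζ
    split_ifs at this <;> omega
  have hB : ∀ ζ, ((startRow k n w c (ζ + k) + #(diagPos n c (ζ + k)) : ℕ) : ℤ) ≤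
        (startRow k n w c ζ + #(diagPos n c ζ) : ℕ) ∧
      ((startRow k n w c ζ + #(diagPos n c ζ) : ℕ) : ℤ) ≤
        (startRow k n w c (ζ + k) + #(diagPos n c (ζ + k)) : ℕ) + 1 := fun ζ => by
    have := startRow_eq (n := n) (w := w) (c := c) hk ζ
    have := card_diagPos_add_le hc hr ζ
    have := card_diagPos_le hc hr ζ
    split_ifs at * <;> omega
  have hshape : (shape hk n w c i : Set (ℕ × ℕ)) =
      (fun x => (x.1 : ℤ) - startRow k n w c (shiftedContent k (i, x))) ⁻¹' Set.Ici 0 ∩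
      (fun x => (x.1 : ℤ) - (startRow k n w c (shiftedContent k (i, x)) +
        #(diagPos n c (shiftedContent k (i, x))) : ℕ)) ⁻¹' Set.Iio 0 := by
    ext x
    simp only [mem_coe, mem_shape_iff hk, Set.mem_inter_iff, Set.mem_preimage, Set.mem_Ici,
      Set.mem_Iio]
    omega
  rw [hshape]
  exact ((isUpperSet_Ici 0).preimage (monotone_sub_shiftedContent hA i)).ordConnected.inter
    ((isLowerSet_Iio 0).preimage (monotone_sub_shiftedContent hB i)).ordConnected

theorem cellEnum_injOn (hk : 0 < k) : Set.InjOn (cellEnum hk n w c) (Set.Icc 1 n) := by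
  intro p hp q hq h
  have hcpq : c p = c q := by
    rw [← shiftedContent_cellEnum (w := w) (c := c) hk hp,
      ← shiftedContent_cellEnum (w := w) (c := c) hk hq, h]
  have hrow : row k n w c p = row k n w c q := congrArg (fun x => x.2.1) h
  rw [row, row, hcpq] at hrow
  exact diagIndex_injOn (c q) (mem_diagPos.2 ⟨hp, hcpq⟩) (mem_diagPos.2 ⟨hq, rfl⟩)
    (Nat.add_left_cancel hrow)

def filling (hk : 0 < k) (n : ℕ) (w : ℕ → ℕ) (c : ℕ → ℤ) (i : Fin k) (x : ℕ × ℕ) : ℕ :=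
  if x ∈ shape hk n w c i then w (Function.invFunOn (cellEnum hk n w c) (Set.Icc 1 n) (i, x))
  else 0

theorem filling_cellEnum (hk : 0 < k) {p : ℕ} (hp : p ∈ Set.Icc 1 n) :
    filling hk n w c (cellEnum hk n w c p).1 (cellEnum hk n w c p).2 = w p := by
  have hmem : (cellEnum hk n w c p).2 ∈ shape hk n w c (cellEnum hk n w c p).1 :=
    mem_image_of_mem _ (mem_filter.2 ⟨mem_Icc.2 hp, rfl⟩)
  rw [filling, if_pos hmem, Prod.mk.eta, (cellEnum_injOn hk).leftInvOn_invFunOn hp]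

theorem semistdOn_shape (hk : 0 < k) (hw : IsPosWord n w) (hc : MonotoneOn c (Set.Icc 1 n))
    (hr : IsRibbonWord k n w c) (i : Fin k) : SemistdOn (shape hk n w c i) (filling hk n w c i) := by
  have hentry : ∀ {x}, x ∈ shape hk n w c i → ∃ p ∈ diagPos n c (shiftedContent k (i, x)),
      row k n w c p = x.1 ∧ filling hk n w c i x = w p := fun hx => by
    obtain ⟨p, hp, he⟩ := exists_mem_diagPos_of_mem_shape hk hx
    refine ⟨p, hp, congrArg (fun x => x.2.1) he, ?_⟩
    rw [← filling_cellEnum (w := w) (c := c) hk (mem_diagPos.1 hp).1, he]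
  refine semistdOn_of_ordConnected (shape_ordConnected hk hc hr i) (fun x hx => ?_)
    (fun x hx => if_neg hx) (fun r col h₁ h₂ => ?_) (fun r col h₁ h₂ => ?_)
  · obtain ⟨p, hp, -, hfill⟩ := hentry hx
    exact hfill ▸ hw.1 p (mem_diagPos.1 hp).1
  · obtain ⟨p, hp, hrp, hfp⟩ := hentry h₁
    obtain ⟨q, hq, hrq, hfq⟩ := hentry h₂
    rw [shiftedContent_col_succ] at hq
    rw [hfp, hfq]
    exact le_of_row_eq hk hc hr hp hq (hrp.trans hrq.symm)
  · obtain ⟨q, hq, hrq, hfq⟩ := hentry h₁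
    obtain ⟨p, hp, hrp, hfp⟩ := hentry h₂
    rw [shiftedContent_row_succ] at hp
    rw [← sub_add_cancel (shiftedContent k (i, (r, col))) (k : ℤ)] at hq
    rw [hfp, hfq]
    exact lt_of_row_eq_add_one hk hc hr hp hq (hrp.trans (by rw [hrq]))

theorem isCellEnum_cellEnum (hk : 0 < k) (hc : MonotoneOn c (Set.Icc 1 n)) :
    IsCellEnum k n (shape hk n w c) (cellEnum hk n w c) := by
  refine ⟨⟨fun p hp => show cell k n w c p ∈ shape hk n w c (tabIndex hk c p) from
    mem_image_of_mem _ (mem_filter.2 ⟨mem_Icc.2 hp, rfl⟩), cellEnum_injOn hk,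
    fun ⟨i, x⟩ hx => ?_⟩, fun p q hp hq hpq => ?_⟩
  · obtain ⟨p, hp, he⟩ := exists_mem_diagPos_of_mem_shape hk hx
    exact ⟨p, (mem_diagPos.1 hp).1, he⟩
  · rw [shiftedContent_cellEnum hk hp, shiftedContent_cellEnum hk hq]
    rcases (hc hp hq hpq.le).lt_or_eq with hlt | heq
    · exact Or.inl hlt
    · refine Or.inr ⟨heq, ?_⟩
      have := diagIndex_lt_diagIndex (mem_diagPos.2 ⟨hp, rfl⟩) (mem_diagPos.2 ⟨hq, heq.symm⟩) hpq
      have := row_add_ediv_nonneg (w := w) (c := c) hk hp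
      simp only [cellEnum, cell, row, heq] at this ⊢
      omega

theorem exists_tableaux_of_isRibbonWord (hk : 0 < k) (hw : IsPosWord n w)
    (hc : MonotoneOn c (Set.Icc 1 n)) (hr : IsRibbonWord k n w c) :
    ∃ S : Fin k → Finset (ℕ × ℕ), (∀ i, IsSkewShape (S i)) ∧
      ∃ T : Fin k → ℕ × ℕ → ℕ, SemistdTuple S T ∧
        ∃ e : ℕ → Fin k × ℕ × ℕ, IsCellEnum k n S e ∧
          ∀ p ∈ Set.Icc 1 n, w p = T (e p).1 (e p).2 ∧ c p = shiftedContent k (e p) :=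
  ⟨shape hk n w c, fun i => isSkewShape_of_ordConnected (shape_ordConnected hk hc hr i),
    filling hk n w c, semistdOn_shape hk hw hc hr, cellEnum hk n w c, isCellEnum_cellEnum hk hc,
    fun _ hp => ⟨(filling_cellEnum hk hp).symm, (shiftedContent_cellEnum hk hp).symm⟩⟩

end Construction

/-- A pair `(w,c)` is a `k`-ribbon word if and only if there
is a `k`-tuple of semistandard Young tableaux of skew shapes such that `w` is
the content reading word of the `k`-tuple and `c` the corresponding sequence
of shifted contents. -/
theorem statement15 (k n : ℕ) (hk : 0 < k) (w : ℕ → ℕ) (c : ℕ → ℤ)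
    (hw : IsPosWord n w)
    (hc : ∀ p q, 1 ≤ p → p ≤ q → q ≤ n → c p ≤ c q) :
    IsRibbonWord k n w c ↔
      ∃ S : Fin k → Finset (ℕ × ℕ), (∀ i, IsSkewShape (S i)) ∧
        ∃ T : Fin k → ℕ × ℕ → ℕ, SemistdTuple S T ∧
          ∃ e : ℕ → Fin k × ℕ × ℕ, IsCellEnum k n S e ∧
            ∀ p ∈ Set.Icc 1 n, w p = T (e p).1 (e p).2 ∧ c p = shiftedContent k (e p) :=
  ⟨exists_tableaux_of_isRibbonWord hk hw fun _ hp _ hq hpq => hc _ _ hp.1 hpq hq.2,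
    fun ⟨_, hS, _, hT, _, he, hmatch⟩ => isRibbonWord_of_cellEnum hS hT he hmatch⟩
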